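/- arXiv:2204.01074 — 2 statements merged into one kernel-verified Lean document; each statement's English description precedes it below -/
import Mathlib

section
/- Let G be a multigraph with χ'(G) = k+1 ≥ Δ(G)+2 where k = Δ(G)+μ(G)−1 (i.e., χ'(G) = Δ(G)+μ(G)), let e be a k-critical edge of G, and let H be the unique maximal k-dense subgraph of G−e containing both endvertices of e. Then Δ(H+e) = Δ(G), μ(H+e) = μ(G), and the diameter of H+e is at most the diameter of H, which is at most 2. -/
/-- A finite multigraph: finite vertex and edge types, each edge has an unordered pair of
endvertices, and there are no loops. -/
structure Multigraph where
  V : Type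
  E : Type
  [fintypeV : Fintype V]
  [fintypeE : Fintype E]
  ends : E → Sym2 V
  loopless : ∀ e, ¬ (ends e).IsDiag

attribute [instance] Multigraph.fintypeV Multigraph.fintypeE

namespace Multigraph

section Basic

variable (G : Multigraph)

/-- The degree of a vertex: the number of edges incident with it. -/
noncomputable def degree (v : G.V) : ℕ := {e : G.E | v ∈ G.ends e}.ncard

/-- The maximum degree Δ(G). -/
noncomputable def maxDegree : ℕ := sSup (Set.range G.degree)

/-- The number of edges joining `x` and `y` (the multiplicity e_G(x,y)). -/
noncomputable def mult (x y : G.V) : ℕ := {e : G.E | G.ends e = s(x, y)}.ncard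

/-- The maximum multiplicity μ(G). -/
noncomputable def maxMult : ℕ := sSup {m : ℕ | ∃ x y : G.V, G.mult x y = m}

/-- `c` is a proper edge coloring, with palette `{1,…,k}`, of the edges in `D`
(edges sharing an endvertex get distinct colors). -/
def IsProperColoringOn (k : ℕ) (D : Set G.E) (c : G.E → ℕ) : Prop :=
  (∀ e ∈ D, c e ∈ Set.Icc 1 k) ∧
  ∀ e ∈ D, ∀ f ∈ D, e ≠ f → (∃ v, v ∈ G.ends e ∧ v ∈ G.ends f) → c e ≠ c f

/-- A proper `k`-edge-coloring of all of `G`. -/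
def IsProperColoring (k : ℕ) (c : G.E → ℕ) : Prop := G.IsProperColoringOn k Set.univ c

/-- The chromatic index of the subgraph of `G` consisting of the edges in `D`
(vertices are irrelevant for edge colorings). -/
noncomputable def chromIndexOn (D : Set G.E) : ℕ := sInf {k | ∃ c, G.IsProperColoringOn k D c}

/-- The chromatic index χ'(G). -/
noncomputable def chromIndex : ℕ := G.chromIndexOn Set.univ

/-- The set of colors of the palette `{1,…,k}` missing at `v`, where only the edges in `D`
are regarded as colored. -/
def missingOn (k : ℕ) (D : Set G.E) (c : G.E → ℕ) (v : G.V) : Set ℕ :=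
  {i | i ∈ Set.Icc 1 k ∧ ∀ e ∈ D, v ∈ G.ends e → c e ≠ i}

/-- `X` is elementary: missing-color sets of distinct vertices of `X` are disjoint. -/
def IsElementaryOn (k : ℕ) (D : Set G.E) (c : G.E → ℕ) (X : Set G.V) : Prop :=
  ∀ u ∈ X, ∀ v ∈ X, u ≠ v → G.missingOn k D c u ∩ G.missingOn k D c v = ∅

/-- The boundary ∂_G(X): edges with an endvertex in `X` and an endvertex outside `X`. -/
def boundary (X : Set G.V) : Set G.E :=
  {e | (∃ v ∈ G.ends e, v ∈ X) ∧ (∃ v ∈ G.ends e, v ∉ X)}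

/-- `X` is strongly closed (w.r.t. the coloring `c` of the edges in `D`): every color on a
boundary edge of `X` is present at every vertex of `X`, and the colors on the boundary edges
are pairwise distinct. -/
def IsStronglyClosedOn (D : Set G.E) (c : G.E → ℕ) (X : Set G.V) : Prop :=
  (∀ e ∈ G.boundary X ∩ D, ∀ v ∈ X, ∃ f ∈ D, v ∈ G.ends f ∧ c f = c e) ∧
  ∀ e ∈ G.boundary X ∩ D, ∀ f ∈ G.boundary X ∩ D, e ≠ f → c e ≠ c f

end Basic

/-- A subgraph of `G`: a set of vertices together with a set of edges all of whose
endvertices belong to the vertex set. -/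
structure Subgraph (G : Multigraph) where
  verts : Set G.V
  edges : Set G.E
  support : ∀ e ∈ edges, ∀ v, v ∈ G.ends e → v ∈ verts

section Sub

variable (G : Multigraph)

/-- The whole graph, as a subgraph of itself. -/
def top : G.Subgraph := ⟨Set.univ, Set.univ, fun _ _ _ _ => Set.mem_univ _⟩

/-- `H` is a `k`-dense subgraph: it has an odd number of vertices and
`|E(H)| = (|V(H)|-1)·k/2`. -/
def IsDense (k : ℕ) (H : G.Subgraph) : Prop :=
  Odd H.verts.ncard ∧ 2 * H.edges.ncard = (H.verts.ncard - 1) * k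

/-- `H` is a `k`-dense subgraph of `G - F` (the graph obtained by deleting the edges of `F`). -/
def IsDenseIn (F : Set G.E) (k : ℕ) (H : G.Subgraph) : Prop :=
  H.edges ∩ F = ∅ ∧ G.IsDense k H

/-- `H` is a maximal `k`-dense subgraph of `G - F`. -/
def IsMaximalDenseIn (F : Set G.E) (k : ℕ) (H : G.Subgraph) : Prop :=
  G.IsDenseIn F k H ∧
  ∀ H' : G.Subgraph, G.IsDenseIn F k H' → H.verts ⊆ H'.verts → H.edges ⊆ H'.edges →
    H.verts = H'.verts ∧ H.edges = H'.edges

/-- The density Γ(H) of a subgraph `H` of `G`: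
`max { 2|E(H')|/(|V(H')|-1) : H' ⊆ H, |V(H')| ≥ 3 odd }` (and `0` if there is no such `H'`,
since in `ℝ` the supremum of the empty set is `0`). -/
noncomputable def densityOf (H : G.Subgraph) : ℝ :=
  sSup {x : ℝ | ∃ H' : G.Subgraph, H'.verts ⊆ H.verts ∧ H'.edges ⊆ H.edges ∧
    3 ≤ H'.verts.ncard ∧ Odd H'.verts.ncard ∧
    x = 2 * (H'.edges.ncard : ℝ) / ((H'.verts.ncard : ℝ) - 1)}

/-- The density Γ(G). -/
noncomputable def density : ℝ := G.densityOf G.top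

/-- `e` is a `k`-critical edge of `G`: `χ'(G-e) = k < χ'(G) = k+1`. -/
def IsCriticalEdge (k : ℕ) (e : G.E) : Prop :=
  G.chromIndexOn {e}ᶜ = k ∧ G.chromIndex = k + 1

/-- Degree of `v` in the subgraph consisting of the edges in `D`. -/
noncomputable def degreeOn (D : Set G.E) (v : G.V) : ℕ := {e : G.E | e ∈ D ∧ v ∈ G.ends e}.ncard

/-- Maximum degree of the subgraph consisting of the edges in `D`. -/
noncomputable def maxDegreeOn (D : Set G.E) : ℕ := sSup (Set.range (G.degreeOn D))

/-- Multiplicity of the pair `x,y` in the subgraph consisting of the edges in `D`. -/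
noncomputable def multOn (D : Set G.E) (x y : G.V) : ℕ :=
  {e : G.E | e ∈ D ∧ G.ends e = s(x, y)}.ncard

/-- Maximum multiplicity of the subgraph consisting of the edges in `D`. -/
noncomputable def maxMultOn (D : Set G.E) : ℕ := sSup {m : ℕ | ∃ x y : G.V, G.multOn D x y = m}

/-- The simple graph underlying the subgraph of `G` with edge set `D`. -/
def simpleOn (D : Set G.E) : SimpleGraph G.V where
  Adj a b := a ≠ b ∧ ∃ e ∈ D, G.ends e = s(a, b)
  symm := ⟨by
    rintro a b ⟨hab, e, he, hh⟩
    exact ⟨hab.symm, e, he, hh.trans Sym2.eq_swap⟩⟩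
  loopless := ⟨by rintro a ⟨h, -⟩; exact h rfl⟩

/-- The diameter (in `ℕ∞`) of the subgraph with vertex set `S` and edge set `D`:
the greatest distance between a pair of its vertices. -/
noncomputable def diamOn (S : Set G.V) (D : Set G.E) : ℕ∞ :=
  sSup {d : ℕ∞ | ∃ u ∈ S, ∃ v ∈ S, (G.simpleOn D).edist u v = d}

/-- The distance (in `ℕ∞`) between two edges of `G`: the length of a shortest path connecting
an endvertex of `e` and an endvertex of `f`. -/
noncomputable def edgeDist (e f : G.E) : ℕ∞ :=
  sInf {d : ℕ∞ | ∃ u v : G.V, u ∈ G.ends e ∧ v ∈ G.ends f ∧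
    (G.simpleOn Set.univ).edist u v = d}

/-- A matching: a set of edges no two of which share an endvertex. -/
def IsMatching (M : Set G.E) : Prop :=
  ∀ e ∈ M, ∀ f ∈ M, e ≠ f → ∀ v : G.V, v ∈ G.ends e → v ∉ G.ends f

/-- An edge `e ∈ E_G(x,y)` is fully `G`-saturated if `d_G(x) = d_G(y) = Δ(G)` and
`e_G(x,y) = μ(G)`. -/
def IsFullySaturated (e : G.E) : Prop :=
  ∃ x y : G.V, G.ends e = s(x, y) ∧ G.degree x = G.maxDegree ∧ G.degree y = G.maxDegree ∧
    G.mult x y = G.maxMult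

/-- One step along a Kempe `(α,β)`-chain: an edge of `D` colored `α` or `β` joining the
two vertices. -/
def chainStep (D : Set G.E) (c : G.E → ℕ) (α β : ℕ) (a b : G.V) : Prop :=
  ∃ e ∈ D, G.ends e = s(a, b) ∧ (c e = α ∨ c e = β)

/-- `u` and `v` lie on the same `(α,β)`-chain, i.e. `P_u(α,β) = P_v(α,β)`. -/
def sameChain (D : Set G.E) (c : G.E → ℕ) (α β : ℕ) (u v : G.V) : Prop :=
  Relation.ReflTransGen (G.chainStep D c α β) u v

end Sub

/-- The Goldberg–Seymour theorem (proved by Chen, Jing and Zang), as a hypothesis: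
every multigraph `G'` with `χ'(G') ≥ Δ(G')+2` satisfies `χ'(G') = ⌈Γ(G')⌉`. -/
def GoldbergSeymour : Prop :=
  ∀ G' : Multigraph, G'.maxDegree + 2 ≤ G'.chromIndex → (G'.chromIndex : ℤ) = ⌈G'.density⌉

/-- A (general) multi-fan at `x` with respect to the edge `e₀ ∈ E_G(x,y₀)` and the coloring
`c` of the edges in `D` with palette `{1,…,k}`: a sequence `(x, e₀, y₀, e₁, y₁, …, e_p, y_p)`
of vertices and pairwise distinct edges with `e_i ∈ E_G(x, y_i)` and, for `i ≥ 1`,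
`c(e_i)` missing at `y_j` for some `j < i`. -/
structure MultiFan (G : Multigraph) (k : ℕ) (D : Set G.E) (c : G.E → ℕ)
    (x : G.V) (e₀ : G.E) (y₀ : G.V) where
  p : ℕ
  edge : Fin (p + 1) → G.E
  vx : Fin (p + 1) → G.V
  edge_zero : edge 0 = e₀
  vx_zero : vx 0 = y₀
  ends_eq : ∀ i, G.ends (edge i) = s(x, vx i)
  edge_inj : Function.Injective edge
  fan_cond : ∀ i : Fin (p + 1), i ≠ 0 →
    ∃ j : Fin (p + 1), j < i ∧ c (edge i) ∈ G.missingOn k D c (vx j)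

namespace MultiFan

variable {G : Multigraph} {k : ℕ} {D : Set G.E} {c : G.E → ℕ} {x : G.V} {e₀ : G.E} {y₀ : G.V}

/-- The vertex set `V(F)` of a multi-fan. -/
def verts (F : MultiFan G k D c x e₀ y₀) : Set G.V := insert x (Set.range F.vx)

/-- `F` is a subsequence of `F'`. -/
def Subseq (F F' : MultiFan G k D c x e₀ y₀) : Prop :=
  ∃ ι : Fin (F.p + 1) → Fin (F'.p + 1), StrictMono ι ∧
    ∀ i, F'.edge (ι i) = F.edge i ∧ F'.vx (ι i) = F.vx i

/-- `F` is a maximal multi-fan: no multi-fan contains it as a proper subsequence. -/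
def IsMaximal (F : MultiFan G k D c x e₀ y₀) : Prop :=
  ∀ F' : MultiFan G k D c x e₀ y₀, F.Subseq F' → F'.p = F.p

/-- `F` contains no `i`-edge. -/
def NoColor (F : MultiFan G k D c x e₀ y₀) (i : ℕ) : Prop :=
  ∀ j, F.edge j ∈ D → c (F.edge j) ≠ i

/-- `F` is a multi-fan without `i`-edges that is maximal among such. -/
def IsMaximalWithout (F : MultiFan G k D c x e₀ y₀) (i : ℕ) : Prop :=
  F.NoColor i ∧
  ∀ F' : MultiFan G k D c x e₀ y₀, F'.NoColor i → F.Subseq F' → F'.p = F.p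

/-- `e_F(x,z)`: the number of edges of the multi-fan `F` joining `x` and `z`. -/
noncomputable def multAt (F : MultiFan G k D c x e₀ y₀) (z : G.V) : ℕ :=
  Nat.card {j : Fin (F.p + 1) // F.vx j = z}

end MultiFan

end Multigraph

/-!
Let `D = E(H) ∪ {e}` and `n = |V(H)|`. Since `H` is `k`-dense, `2|D| = (n - 1)k + 2`, while every
colour class of a proper edge colouring of `H + e` is a matching with at most `(n - 1)/2` edges
(`n` is odd). Hence `χ'(H + e) ≥ k + 1 ≥ Δ(H + e) + 2`, and Goldberg–Seymour together with the
trivial bound `Γ ≤ Δ + μ` gives `k + 1 ≤ Δ(H + e) + μ(H + e) ≤ Δ(G) + μ(G) = k + 1`.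

For the diameter, all vertices but `w` have degree at most `Δ`, so counting degrees in `H + e`
gives `d_H(w) ≥ (n - 1)(μ - 1) + 1` for every `w`. Two vertices at distance more than two have
disjoint neighbourhoods among the other `n - 2` vertices, each neighbour joined by at most `μ`
edges, which leaves them too few edges once `μ ≥ 2`.
-/

open Finset

namespace Multigraph

variable (G : Multigraph)

lemma degreeOn_le_degree (D : Set G.E) (v : G.V) : G.degreeOn D v ≤ G.degree v :=
  Set.ncard_le_ncard (fun _ hf => hf.2)

lemma degree_le_maxDegree (v : G.V) : G.degree v ≤ G.maxDegree :=
  le_csSup (Set.finite_range _).bddAbove ⟨v, rfl⟩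

lemma degreeOn_le_maxDegree (D : Set G.E) (v : G.V) : G.degreeOn D v ≤ G.maxDegree :=
  (G.degreeOn_le_degree D v).trans (G.degree_le_maxDegree v)

lemma maxDegreeOn_le_maxDegree (D : Set G.E) : G.maxDegreeOn D ≤ G.maxDegree :=
  csSup_le' <| Set.forall_mem_range.2 (G.degreeOn_le_maxDegree D)

lemma degreeOn_insert_le (D : Set G.E) (e : G.E) (v : G.V) :
    G.degreeOn (insert e D) v ≤ G.degreeOn D v + 1 := by
  have hsub : {f | f ∈ insert e D ∧ v ∈ G.ends f} ⊆ insert e {f | f ∈ D ∧ v ∈ G.ends f} := by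
    rintro f ⟨rfl | hf, hv⟩
    exacts [Set.mem_insert _ _, Set.mem_insert_of_mem _ ⟨hf, hv⟩]
  exact (Set.ncard_le_ncard hsub).trans (Set.ncard_insert_le _ _)

lemma mult_le_maxMult (x y : G.V) : G.mult x y ≤ G.maxMult := by
  refine le_csSup ?_ ⟨x, y, rfl⟩
  refine (Set.finite_range fun p : G.V × G.V => G.mult p.1 p.2).bddAbove.mono ?_
  rintro _ ⟨x, y, rfl⟩
  exact ⟨(x, y), rfl⟩

lemma multOn_le_maxMult (D : Set G.E) (x y : G.V) : G.multOn D x y ≤ G.maxMult :=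
  (Set.ncard_le_ncard fun _ hf => hf.2).trans (G.mult_le_maxMult x y)

lemma maxMultOn_le_maxMult (D : Set G.E) : G.maxMultOn D ≤ G.maxMult :=
  csSup_le' <| by rintro _ ⟨x, y, rfl⟩; exact G.multOn_le_maxMult D x y

lemma degreeOn_le_maxMult_mul_ncard_neighborSet (D : Set G.E) (v : G.V) :
    G.degreeOn D v ≤ G.maxMult * ((G.simpleOn D).neighborSet v).ncard := by
  classical
  set N := (G.simpleOn D).neighborSet v
  have hcover : {f | f ∈ D ∧ v ∈ G.ends f} ⊆
      ⋃ z ∈ N.toFinset, {f | f ∈ D ∧ G.ends f = s(v, z)} := by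
    rintro f ⟨hfD, hvf⟩
    have hspec : s(v, Sym2.Mem.other hvf) = G.ends f := Sym2.other_spec hvf
    refine Set.mem_iUnion₂.2 ⟨_, ?_, hfD, hspec.symm⟩
    refine Set.mem_toFinset.2 ⟨fun h => G.loopless f ?_, f, hfD, hspec.symm⟩
    rw [← hspec, ← h]
    exact Sym2.mk_isDiag_iff.2 rfl
  calc G.degreeOn D v ≤ (⋃ z ∈ N.toFinset, {f | f ∈ D ∧ G.ends f = s(v, z)}).ncard :=
        Set.ncard_le_ncard hcover
    _ ≤ ∑ z ∈ N.toFinset, G.multOn D v z := Finset.set_ncard_biUnion_le _ _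
    _ ≤ ∑ _z ∈ N.toFinset, G.maxMult := Finset.sum_le_sum fun z _ => G.multOn_le_maxMult D v z
    _ = G.maxMult * N.ncard := by
        rw [Finset.sum_const, smul_eq_mul, Set.ncard_eq_toFinset_card', mul_comm]

lemma neighborSet_simpleOn_subset (K : G.Subgraph) (v : G.V) :
    (G.simpleOn K.edges).neighborSet v ⊆ K.verts \ {v} := by
  rintro z ⟨hvz, f, hf, hends⟩
  exact ⟨K.support f hf z (hends ▸ Sym2.mem_mk_right v z), Ne.symm hvz⟩

lemma sum_degreeOn_eq (D : Set G.E) (S : Finset G.V) (hS : ∀ f ∈ D, ∀ v ∈ G.ends f, v ∈ S) :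
    ∑ v ∈ S, G.degreeOn D v = 2 * D.ncard := by
  classical
  have hends : ∀ f ∈ D.toFinset, #(S.bipartiteBelow (fun v f => v ∈ G.ends f) f) = 2 := by
    intro f hf
    rw [Set.mem_toFinset] at hf
    rw [← Sym2.card_toFinset_of_not_isDiag _ (G.loopless f)]
    congr 1
    ext v
    simp only [Finset.bipartiteBelow, Finset.mem_filter, Sym2.mem_toFinset]
    exact ⟨And.right, fun hv => ⟨hS f hf v hv, hv⟩⟩
  calc ∑ v ∈ S, G.degreeOn D v
      = ∑ v ∈ S, #(D.toFinset.bipartiteAbove (fun v f => v ∈ G.ends f) v) := by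
        refine Finset.sum_congr rfl fun v _ => ?_
        rw [Multigraph.degreeOn, Set.ncard_eq_toFinset_card']
        congr 1
        ext f
        simp [Finset.bipartiteAbove]
    _ = ∑ f ∈ D.toFinset, #(S.bipartiteBelow (fun v f => v ∈ G.ends f) f) :=
        Finset.sum_card_bipartiteAbove_eq_sum_card_bipartiteBelow _
    _ = 2 * D.ncard := by
        rw [Finset.sum_congr rfl hends, Finset.sum_const, smul_eq_mul,
          Set.ncard_eq_toFinset_card', mul_comm]

variable {G} in
lemma IsMatching.degreeOn_le_one {M : Set G.E} (hM : G.IsMatching M) (v : G.V) :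
    G.degreeOn M v ≤ 1 :=
  (Set.ncard_le_one_iff (Set.toFinite _)).2 fun {f g} hf hg =>
    by_contra fun hfg => hM f hf.1 g hg.1 hfg v hf.2 hg.2

variable {G} in
lemma IsMatching.two_mul_ncard_le {M : Set G.E} (hM : G.IsMatching M) (S : Finset G.V)
    (hS : ∀ f ∈ M, ∀ v ∈ G.ends f, v ∈ S) : 2 * M.ncard ≤ #S := by
  rw [← G.sum_degreeOn_eq M S hS, Finset.card_eq_sum_ones]
  exact Finset.sum_le_sum fun v _ => hM.degreeOn_le_one v

lemma isMatching_colorClass {t : ℕ} {c : G.E → ℕ} (hc : G.IsProperColoring t c) (i : ℕ) :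
    G.IsMatching {f | c f = i} := fun f hf g hg hfg v hvf hvg =>
  hc.2 f trivial g trivial hfg ⟨v, hvf, hvg⟩ (hf.trans hg.symm)

lemma two_mul_card_le_of_isProperColoring (S : Set G.V)
    (hS : ∀ f : G.E, ∀ v ∈ G.ends f, v ∈ S) (hodd : Odd S.ncard) {t : ℕ} {c : G.E → ℕ}
    (hc : G.IsProperColoring t c) : 2 * Nat.card G.E ≤ (S.ncard - 1) * t := by
  classical
  obtain ⟨S, rfl⟩ := S.toFinite.exists_finset_coe
  rw [Set.ncard_coe_finset] at hodd ⊢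
  have hclass : ∀ i, 2 * #{f | c f = i} ≤ #S - 1 := by
    intro i
    have h := (G.isMatching_colorClass hc i).two_mul_ncard_le S fun f _ => hS f
    rw [Set.ncard_eq_toFinset_card', Set.toFinset_ofPred] at h
    obtain ⟨s, hs⟩ := hodd
    omega
  calc 2 * Nat.card G.E = 2 * ∑ i ∈ Icc 1 t, #{f | c f = i} := by
        rw [Nat.card_eq_fintype_card, ← Finset.card_univ,
          Finset.card_eq_sum_card_fiberwise fun f _ => Finset.mem_Icc.2 (hc.1 f trivial)]
    _ = ∑ i ∈ Icc 1 t, 2 * #{f | c f = i} := Finset.mul_sum _ _ _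
    _ ≤ ∑ _i ∈ Icc 1 t, (#S - 1) := Finset.sum_le_sum fun i _ => hclass i
    _ = (#S - 1) * t := by simp [mul_comm]

lemma exists_isProperColoring_chromIndex : ∃ c, G.IsProperColoring G.chromIndex c := by
  refine Nat.sInf_mem (s := {k | ∃ c, G.IsProperColoringOn k Set.univ c})
    ⟨Fintype.card G.E, fun f => Fintype.equivFin G.E f + 1, ?_, ?_⟩
  · intro f _
    exact ⟨Nat.le_add_left 1 _, (Fintype.equivFin G.E f).isLt⟩
  · intro f _ g _ hfg _ hc
    exact hfg ((Fintype.equivFin G.E).injective (Fin.ext (Nat.add_right_cancel hc)))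

lemma lt_chromIndex_of_mul_lt_two_mul_card (S : Set G.V)
    (hS : ∀ f : G.E, ∀ v ∈ G.ends f, v ∈ S) (hodd : Odd S.ncard) {k : ℕ}
    (h : (S.ncard - 1) * k < 2 * Nat.card G.E) : k < G.chromIndex := by
  obtain ⟨c, hc⟩ := G.exists_isProperColoring_chromIndex
  by_contra! hle
  have := G.two_mul_card_le_of_isProperColoring S hS hodd hc
  have := Nat.mul_le_mul_left (S.ncard - 1) hle
  omega

lemma two_mul_ncard_edges_le (K : G.Subgraph) :
    2 * K.edges.ncard ≤ (K.verts.ncard - 1) * (G.maxDegree + G.maxMult) := by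
  classical
  set n := K.verts.ncard
  have hn : #K.verts.toFinset = n := (Set.ncard_eq_toFinset_card' _).symm
  have hsum := G.sum_degreeOn_eq K.edges K.verts.toFinset
    fun f hf v hv => Set.mem_toFinset.2 (K.support f hf v hv)
  rcases Nat.eq_zero_or_pos n with hn0 | hnpos
  · rw [Finset.card_eq_zero.1 (hn.trans hn0), Finset.sum_empty] at hsum
    omega
  have hvert : ∀ v ∈ K.verts.toFinset,
      n * G.degreeOn K.edges v ≤ (n - 1) * (G.maxDegree + G.maxMult) := by
    intro v hv
    have hΔ := G.degreeOn_le_maxDegree K.edges v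
    have hμ : G.degreeOn K.edges v ≤ G.maxMult * (n - 1) := by
      refine (G.degreeOn_le_maxMult_mul_ncard_neighborSet K.edges v).trans ?_
      gcongr
      refine (Set.ncard_le_ncard (G.neighborSet_simpleOn_subset K v)).trans_eq ?_
      exact Set.ncard_sdiff_singleton_of_mem (Set.mem_toFinset.1 hv)
    obtain ⟨m, hm⟩ : ∃ m, n = m + 1 := ⟨n - 1, by omega⟩
    rw [hm, Nat.add_sub_cancel] at hμ ⊢
    have := Nat.mul_le_mul_left m hΔ
    linarith
  have := Finset.sum_le_sum hvert
  rw [← Finset.mul_sum, hsum, Finset.sum_const, hn, smul_eq_mul] at this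
  exact Nat.le_of_mul_le_mul_left this hnpos

lemma density_le_maxDegree_add_maxMult : G.density ≤ G.maxDegree + G.maxMult := by
  refine Real.sSup_le ?_ (by positivity)
  rintro _ ⟨K, -, -, h3, -, rfl⟩
  have hK := G.two_mul_ncard_edges_le K
  obtain ⟨m, hm⟩ : ∃ m, K.verts.ncard = m + 1 := ⟨K.verts.ncard - 1, by omega⟩
  rw [hm, Nat.add_sub_cancel] at hK
  rw [hm, Nat.cast_add, Nat.cast_one, add_sub_cancel_right,
    div_le_iff₀ (by exact_mod_cast (show 0 < m by omega))]
  exact_mod_cast (mul_comm m _).symm ▸ hK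

lemma GoldbergSeymour.chromIndex_le_maxDegree_add_maxMult (hGS : GoldbergSeymour)
    (G : Multigraph) (h : G.maxDegree + 2 ≤ G.chromIndex) :
    G.chromIndex ≤ G.maxDegree + G.maxMult := by
  have hceil : ⌈G.density⌉ ≤ ((G.maxDegree + G.maxMult : ℕ) : ℤ) :=
    Int.ceil_le.2 (by exact_mod_cast G.density_le_maxDegree_add_maxMult)
  exact_mod_cast (hGS G h).trans_le hceil

noncomputable def restrictEdges (D : Set G.E) : Multigraph where
  V := G.V
  E := D
  fintypeE := Fintype.ofFinite D
  ends f := G.ends f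
  loopless f := G.loopless f

lemma card_restrictEdges (D : Set G.E) : Nat.card (G.restrictEdges D).E = D.ncard :=
  Nat.card_coe_set_eq D

lemma restrictEdges_degree (D : Set G.E) (v : G.V) :
    (G.restrictEdges D).degree v = G.degreeOn D v :=
  (Set.ncard_subtype (· ∈ D) {f | v ∈ G.ends f}).trans <| congrArg Set.ncard <|
    Set.ext fun _ => and_comm

lemma restrictEdges_maxDegree (D : Set G.E) :
    (G.restrictEdges D).maxDegree = G.maxDegreeOn D :=
  congrArg (sSup ∘ Set.range) (funext (G.restrictEdges_degree D))

lemma restrictEdges_mult (D : Set G.E) (x y : G.V) :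
    (G.restrictEdges D).mult x y = G.multOn D x y :=
  (Set.ncard_subtype (· ∈ D) {f | G.ends f = s(x, y)}).trans <| congrArg Set.ncard <|
    Set.ext fun _ => and_comm

lemma restrictEdges_maxMult (D : Set G.E) :
    (G.restrictEdges D).maxMult = G.maxMultOn D :=
  congrArg sSup <| Set.ext fun _ =>
    exists_congr fun x => exists_congr fun y => by rw [← G.restrictEdges_mult D x y]

lemma simpleOn_mono {D D' : Set G.E} (h : D ⊆ D') : G.simpleOn D ≤ G.simpleOn D' :=
  fun _ _ ⟨hne, f, hf, hends⟩ => ⟨hne, f, h hf, hends⟩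

lemma diamOn_anti {D D' : Set G.E} (h : D ⊆ D') (S : Set G.V) :
    G.diamOn S D' ≤ G.diamOn S D :=
  sSup_le <| by
    rintro _ ⟨u, hu, v, hv, rfl⟩
    exact (SimpleGraph.edist_anti (G.simpleOn_mono h)).trans (le_sSup ⟨u, hu, v, hv, rfl⟩)

lemma edist_simpleOn_le_two (K : G.Subgraph) {u v : G.V} (hu : u ∈ K.verts) (hv : v ∈ K.verts)
    (h : G.maxMult * (K.verts.ncard - 2) < G.degreeOn K.edges u + G.degreeOn K.edges v) :
    (G.simpleOn K.edges).edist u v ≤ 2 := by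
  by_contra! hlt
  obtain ⟨huv, hadj, hcommon⟩ := SimpleGraph.two_lt_edist_iff.1 hlt
  set N := (G.simpleOn K.edges).neighborSet
  have hdisj : Disjoint (N u) (N v) := by
    rwa [Set.disjoint_iff_inter_eq_empty, ← SimpleGraph.commonNeighbors_eq]
  have hsub : N u ∪ N v ⊆ K.verts \ {u, v} := by
    rintro z (hz | hz) <;> obtain ⟨hzK, hzne⟩ := G.neighborSet_simpleOn_subset K _ hz
    · refine ⟨hzK, ?_⟩
      rintro (rfl | rfl)
      exacts [hzne rfl, hadj hz]
    · refine ⟨hzK, ?_⟩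
      rintro (rfl | rfl)
      exacts [hadj (SimpleGraph.Adj.symm hz), hzne rfl]
  have hcard : (N u).ncard + (N v).ncard ≤ K.verts.ncard - 2 := by
    rw [← Set.ncard_union_eq hdisj, ← Set.ncard_pair huv,
      ← Set.ncard_sdiff (Set.pair_subset hu hv)]
    exact Set.ncard_le_ncard hsub
  have hdu : G.degreeOn K.edges u ≤ G.maxMult * (N u).ncard :=
    G.degreeOn_le_maxMult_mul_ncard_neighborSet K.edges u
  have hdv : G.degreeOn K.edges v ≤ G.maxMult * (N v).ncard :=
    G.degreeOn_le_maxMult_mul_ncard_neighborSet K.edges v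
  have := Nat.mul_le_mul_left G.maxMult hcard
  rw [mul_add] at this
  omega

lemma diamOn_le_two (K : G.Subgraph)
    (h : ∀ v ∈ K.verts, G.maxMult * (K.verts.ncard - 2) < 2 * G.degreeOn K.edges v) :
    G.diamOn K.verts K.edges ≤ 2 :=
  sSup_le <| by
    rintro _ ⟨u, hu, v, hv, rfl⟩
    exact G.edist_simpleOn_le_two K hu hv (by linarith [h u hu, h v hv])

lemma two_mul_ncard_le_degreeOn_add (D : Set G.E) (S : Finset G.V)
    (hS : ∀ f ∈ D, ∀ v ∈ G.ends f, v ∈ S) {w : G.V} (hw : w ∈ S) :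
    2 * D.ncard ≤ G.degreeOn D w + (#S - 1) * G.maxDegree := by
  classical
  rw [← G.sum_degreeOn_eq D S hS, ← Finset.add_sum_erase S _ hw, ← Finset.card_erase_of_mem hw,
    ← smul_eq_mul]
  gcongr
  exact Finset.sum_le_card_nsmul _ _ _ fun v _ => G.degreeOn_le_maxDegree D v

lemma maxMult_mul_add_two_lt_two_mul_degreeOn {D : Set G.E} {S : Set G.V}
    (hDS : ∀ f ∈ D, ∀ v ∈ G.ends f, v ∈ S) {k : ℕ} (hk : k + 1 = G.maxDegree + G.maxMult)
    (hμ : 2 ≤ G.maxMult) (hD : 2 * D.ncard = (S.ncard - 1) * k + 2) {w : G.V} (hw : w ∈ S) :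
    G.maxMult * (S.ncard - 2) + 2 < 2 * G.degreeOn D w := by
  obtain ⟨S, rfl⟩ := S.toFinite.exists_finset_coe
  rw [Set.ncard_coe_finset] at hD ⊢
  have hwD := G.two_mul_ncard_le_degreeOn_add D S hDS hw
  obtain ⟨m, hm⟩ : ∃ m, #S = m + 1 := ⟨#S - 1, by have := Finset.card_pos.2 ⟨w, hw⟩; omega⟩
  rw [hm, Nat.add_sub_cancel] at hD hwD
  rw [hm]
  -- `d(w) ≥ 2|D| - mΔ = m(μ - 1) + 2`, and `μ(m - 1) + 2 < 2m(μ - 1) + 4` because `μ ≥ 2`.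
  have hmk : m * k + m = m * G.maxDegree + m * G.maxMult := by
    rw [← mul_add, ← hk, mul_add_one]
  rcases m with _ | j
  · omega
  · rw [show j + 1 + 1 - 2 = j by omega]
    nlinarith [Nat.mul_le_mul_left j hμ]

lemma GoldbergSeymour.lt_maxDegreeOn_add_maxMultOn (hGS : GoldbergSeymour) (G : Multigraph)
    {D : Set G.E} {S : Set G.V} (hDS : ∀ f ∈ D, ∀ v ∈ G.ends f, v ∈ S) (hodd : Odd S.ncard)
    {k : ℕ} (hDk : G.maxDegreeOn D < k) (hD : (S.ncard - 1) * k < 2 * D.ncard) :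
    k < G.maxDegreeOn D + G.maxMultOn D := by
  have hχ : k < (G.restrictEdges D).chromIndex :=
    (G.restrictEdges D).lt_chromIndex_of_mul_lt_two_mul_card S
      (fun (f : D) v hv => hDS f f.2 v hv) hodd (by rwa [card_restrictEdges])
  have h := hGS.chromIndex_le_maxDegree_add_maxMult (G.restrictEdges D)
    (by rw [restrictEdges_maxDegree]; omega)
  rw [restrictEdges_maxDegree, restrictEdges_maxMult] at h
  omega

end Multigraph

theorem maximal_dense_degree_mult_diam_general (hGS : Multigraph.GoldbergSeymour)
    (G : Multigraph) (k : ℕ)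
    (hk : k + 1 = G.maxDegree + G.maxMult)
    (hΔ : G.maxDegree + 2 ≤ k + 1)
    (e : G.E)
    (H : G.Subgraph) (hH : G.IsMaximalDenseIn {e} k H)
    (hVe : ∀ v, v ∈ G.ends e → v ∈ H.verts) :
    G.maxDegreeOn (insert e H.edges) = G.maxDegree ∧
    G.maxMultOn (insert e H.edges) = G.maxMult ∧
    G.diamOn H.verts (insert e H.edges) ≤ G.diamOn H.verts H.edges ∧
    G.diamOn H.verts H.edges ≤ 2 := by
  obtain ⟨⟨heH, hodd, hdense⟩, -⟩ := hH
  have hDH : ∀ f ∈ insert e H.edges, ∀ v ∈ G.ends f, v ∈ H.verts := by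
    rintro f (rfl | hf) v hv
    exacts [hVe v hv, H.support f hf v hv]
  have hD : 2 * (insert e H.edges).ncard = (H.verts.ncard - 1) * k + 2 := by
    rw [Set.ncard_insert_of_notMem fun h => Set.eq_empty_iff_forall_notMem.1 heH e ⟨h, rfl⟩]
    omega
  have hΔD := G.maxDegreeOn_le_maxDegree (insert e H.edges)
  have hμD := G.maxMultOn_le_maxMult (insert e H.edges)
  have hΔμD := hGS.lt_maxDegreeOn_add_maxMultOn G (k := k) hDH hodd (by omega) (by omega)
  refine ⟨by omega, by omega, G.diamOn_anti (Set.subset_insert e _) _,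
    G.diamOn_le_two H fun w hw => ?_⟩
  have hdeg := G.maxMult_mul_add_two_lt_two_mul_degreeOn hDH hk (by omega) hD hw
  have hdeg_insert := G.degreeOn_insert_le H.edges e w
  omega

/-- **Lemma 2.4(c).** (Assuming the Goldberg–Seymour theorem.) Let `χ'(G) = k+1 ≥ Δ(G)+2`
where `k = Δ(G)+μ(G)-1` (i.e. `χ'(G) = Δ(G)+μ(G)`), let `e` be a `k`-critical edge of `G`,
and let `H` be the (unique) maximal `k`-dense subgraph of `G-e` containing both endvertices
of `e`. Then `Δ(H+e) = Δ(G)`, `μ(H+e) = μ(G)` and `diam(H+e) ≤ diam(H) ≤ 2`. -/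
theorem maximal_dense_degree_mult_diam (hGS : Multigraph.GoldbergSeymour)
    (G : Multigraph) (k : ℕ)
    (hk : k + 1 = G.maxDegree + G.maxMult)
    (hχ : G.chromIndex = k + 1) (hΔ : G.maxDegree + 2 ≤ k + 1)
    (e : G.E) (he : G.IsCriticalEdge k e)
    (H : G.Subgraph) (hH : G.IsMaximalDenseIn {e} k H)
    (hVe : ∀ v, v ∈ G.ends e → v ∈ H.verts) :
    G.maxDegreeOn (insert e H.edges) = G.maxDegree ∧
    G.maxMultOn (insert e H.edges) = G.maxMult ∧
    G.diamOn H.verts (insert e H.edges) ≤ G.diamOn H.verts H.edges ∧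
    G.diamOn H.verts H.edges ≤ 2 :=
  maximal_dense_degree_mult_diam_general hGS G k hk hΔ e H hH hVe
end

section
/- Let G be a multigraph, let e ∈ E_G(x,y) be a k-critical edge with k ≥ Δ(G), let φ be a k-edge-coloring of G−e, and let F = (x, e, y_0, e_1, y_1, …, e_p, y_p) with y_0 = y be a multi-fan at x with respect to e and φ. If α ∈ φ̄(x) and β ∈ φ̄(y_i) for some 0 ≤ i ≤ p, then the (α,β)-chain containing x and the (α,β)-chain containing y_i coincide: P_x(α,β) = P_{y_i}(α,β). -/
/-!
If a color `γ` is missing both at `x` and at a fan vertex `y_i`, then `G` is `k`-colorable: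
the fan condition gives `j < i` with `φ(e_i)` missing at `y_j`; recoloring `e_i` with `γ` makes
`φ(e_i)` missing at both `x` and `y_j`, and the fan up to `y_j` survives, so we may descend to
`y₀` and color `e₀`. Now if `x ∉ P_{y_i}(α,β)`, swap `α` and `β` on that chain: `α` stays missing
at `x` and becomes missing at `y_i`. The fan up to `y_i` is still a multi-fan for the new
coloring, since a `β`-edge `e_{i'}` is justified by some `y_j` with `j < i`, which by induction
lies on the chain of `x` and is therefore untouched by the swap.
-/

namespace Multigraph

variable {G : Multigraph} {k : ℕ} {D : Set G.E} {c : G.E → ℕ}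

lemma IsCriticalEdge.not_exists_isProperColoring {e : G.E} (he : G.IsCriticalEdge k e) :
    ¬ ∃ c, G.IsProperColoring k c := by
  rintro ⟨c, hc⟩
  have hle : G.chromIndex ≤ k := Nat.sInf_le ⟨c, hc⟩
  rw [he.2] at hle
  omega

lemma IsProperColoringOn.mono {D' : Set G.E} (hc : G.IsProperColoringOn k D c) (h : D' ⊆ D) :
    G.IsProperColoringOn k D' c :=
  ⟨fun e he => hc.1 e (h he), fun e he f hf => hc.2 e (h he) f (h hf)⟩

lemma missingOn_anti {D' : Set G.E} (h : D' ⊆ D) (v : G.V) :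
    G.missingOn k D c v ⊆ G.missingOn k D' c v :=
  fun _ hi => ⟨hi.1, fun e he => hi.2 e (h he)⟩

section Update

variable [DecidableEq G.E] {g : G.E} {γ : ℕ}

lemma IsProperColoringOn.update (hc : G.IsProperColoringOn k D c)
    (hγ : ∀ v ∈ G.ends g, γ ∈ G.missingOn k D c v) :
    G.IsProperColoringOn k (insert g D) (Function.update c g γ) := by
  constructor
  · intro e he
    rcases eq_or_ne e g with rfl | heg
    · simpa using (hγ _ (Sym2.out_fst_mem _)).1
    · rw [Function.update_of_ne heg]
      exact hc.1 e (he.resolve_left heg)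
  · have hγe : ∀ e ∈ insert g D, e ≠ g → ∀ v ∈ G.ends g, v ∈ G.ends e → c e ≠ γ :=
      fun e he heg v hv hve => (hγ v hv).2 e (he.resolve_left heg) hve
    rintro e he f hf hef ⟨v, hve, hvf⟩
    rcases eq_or_ne e g with heg | heg <;> rcases eq_or_ne f g with hfg | hfg
    · exact absurd (heg.trans hfg.symm) hef
    · subst heg
      simpa [Function.update_of_ne hfg] using (hγe f hf hfg v hve hvf).symm
    · subst hfg
      simpa [Function.update_of_ne heg] using hγe e he heg v hvf hve
    · rw [Function.update_of_ne heg, Function.update_of_ne hfg]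
      exact hc.2 e (he.resolve_left heg) f (hf.resolve_left hfg) hef ⟨v, hve, hvf⟩

lemma mem_missingOn_update_of_ne {δ : ℕ} {v : G.V} (hδ : δ ∈ G.missingOn k D c v)
    (hne : δ ≠ γ) : δ ∈ G.missingOn k D (Function.update c g γ) v := by
  refine ⟨hδ.1, fun e he hv => ?_⟩
  rcases eq_or_ne e g with rfl | heg
  · simpa using hne.symm
  · rw [Function.update_of_ne heg]
    exact hδ.2 e he hv

lemma apply_mem_missingOn_update (hc : G.IsProperColoringOn k D c) (hg : g ∈ D) {v : G.V}
    (hv : v ∈ G.ends g) (hne : c g ≠ γ) :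
    c g ∈ G.missingOn k D (Function.update c g γ) v := by
  refine ⟨hc.1 g hg, fun e he hve => ?_⟩
  rcases eq_or_ne e g with rfl | heg
  · simpa using hne.symm
  · rw [Function.update_of_ne heg]
    exact hc.2 e he g hg heg ⟨v, hve, hv⟩

end Update

lemma exists_isProperColoring_of_forall_mem_missingOn {g : G.E} {γ : ℕ}
    (hc : G.IsProperColoringOn k {g}ᶜ c) (hγ : ∀ v ∈ G.ends g, γ ∈ G.missingOn k {g}ᶜ c v) :
    ∃ c', G.IsProperColoring k c' := by
  classical
  exact ⟨_, (hc.update hγ).mono fun e _ => by by_cases h : e = g <;> simp [h]⟩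

section Kempe

variable {α β : ℕ} {C : Set G.V}

lemma chainStep_symm {a b : G.V} (h : G.chainStep D c α β a b) : G.chainStep D c α β b a :=
  let ⟨e, he, hab, hcol⟩ := h
  ⟨e, he, hab.trans Sym2.eq_swap, hcol⟩

lemma sameChain_symm {a b : G.V} (h : G.sameChain D c α β a b) : G.sameChain D c α β b a :=
  Relation.ReflTransGen.mono (fun _ _ => chainStep_symm) _ _ (Relation.ReflTransGen.swap _ _ h)

lemma swap_mem_Icc {δ : ℕ} (hα : α ∈ Set.Icc 1 k) (hβ : β ∈ Set.Icc 1 k)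
    (hδ : δ ∈ Set.Icc 1 k) : Equiv.swap α β δ ∈ Set.Icc 1 k := by
  rw [Equiv.swap_apply_def]
  split_ifs <;> assumption

variable (G) in
/-- `Equiv.swap α β` fixes every other color, so when `C` is closed under `(α,β)`-chain steps
this is the Kempe change on the chains inside `C`. -/
noncomputable def kempeSwap (c : G.E → ℕ) (α β : ℕ) (C : Set G.V) : G.E → ℕ :=
  open Classical in fun e => if ∃ v ∈ G.ends e, v ∈ C then Equiv.swap α β (c e) else c e

lemma kempeSwap_of_mem {e : G.E} {v : G.V} (hv : v ∈ G.ends e) (hvC : v ∈ C) :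
    G.kempeSwap c α β C e = Equiv.swap α β (c e) :=
  if_pos ⟨v, hv, hvC⟩

lemma kempeSwap_of_notMem (hC : ∀ a b, G.chainStep D c α β a b → a ∈ C → b ∈ C)
    {e : G.E} (he : e ∈ D) {v : G.V} (hv : v ∈ G.ends e) (hvC : v ∉ C) :
    G.kempeSwap c α β C e = c e := by
  unfold kempeSwap
  split_ifs with h
  · obtain ⟨w, hw, hwC⟩ := h
    have hwv : w ≠ v := by rintro rfl; exact hvC hwC
    have hends : G.ends e = s(w, v) := (Sym2.mem_and_mem_iff hwv).mp ⟨hw, hv⟩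
    refine Equiv.swap_apply_of_ne_of_ne ?_ ?_ <;> intro hcol
    · exact hvC (hC w v ⟨e, he, hends, Or.inl hcol⟩ hwC)
    · exact hvC (hC w v ⟨e, he, hends, Or.inr hcol⟩ hwC)
  · rfl

lemma IsProperColoringOn.kempeSwap (hc : G.IsProperColoringOn k D c) (hα : α ∈ Set.Icc 1 k)
    (hβ : β ∈ Set.Icc 1 k) (hC : ∀ a b, G.chainStep D c α β a b → a ∈ C → b ∈ C) :
    G.IsProperColoringOn k D (G.kempeSwap c α β C) := by
  constructor
  · intro e he
    unfold Multigraph.kempeSwap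
    split_ifs
    exacts [swap_mem_Icc hα hβ (hc.1 e he), hc.1 e he]
  · rintro e he f hf hef ⟨v, hve, hvf⟩
    have hne := hc.2 e he f hf hef ⟨v, hve, hvf⟩
    by_cases hvC : v ∈ C
    · rw [kempeSwap_of_mem hve hvC, kempeSwap_of_mem hvf hvC]
      exact (Equiv.swap α β).injective.ne hne
    · rwa [kempeSwap_of_notMem hC he hve hvC, kempeSwap_of_notMem hC hf hvf hvC]

lemma mem_missingOn_kempeSwap_of_notMem (hC : ∀ a b, G.chainStep D c α β a b → a ∈ C → b ∈ C)
    {v : G.V} (hvC : v ∉ C) {δ : ℕ} (hδ : δ ∈ G.missingOn k D c v) :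
    δ ∈ G.missingOn k D (G.kempeSwap c α β C) v :=
  ⟨hδ.1, fun e he hv => kempeSwap_of_notMem hC he hv hvC ▸ hδ.2 e he hv⟩

lemma mem_missingOn_kempeSwap_of_ne {v : G.V} {δ : ℕ} (hδα : δ ≠ α) (hδβ : δ ≠ β)
    (hδ : δ ∈ G.missingOn k D c v) : δ ∈ G.missingOn k D (G.kempeSwap c α β C) v := by
  refine ⟨hδ.1, fun e he hv => ?_⟩
  unfold kempeSwap
  split_ifs
  · rw [Ne, Equiv.swap_apply_eq_iff, Equiv.swap_apply_of_ne_of_ne hδα hδβ]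
    exact hδ.2 e he hv
  · exact hδ.2 e he hv

lemma swap_mem_missingOn_kempeSwap (hα : α ∈ Set.Icc 1 k) (hβ : β ∈ Set.Icc 1 k) {v : G.V}
    (hvC : v ∈ C) {δ : ℕ} (hδ : δ ∈ G.missingOn k D c v) :
    Equiv.swap α β δ ∈ G.missingOn k D (G.kempeSwap c α β C) v :=
  ⟨swap_mem_Icc hα hβ hδ.1, fun e he hv => by
    rw [kempeSwap_of_mem hv hvC]
    exact (Equiv.swap α β).injective.ne (hδ.2 e he hv)⟩

end Kempe

namespace MultiFan

variable {x : G.V} {e₀ : G.E} {y₀ : G.V}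

lemma mem_ends_edge (F : MultiFan G k D c x e₀ y₀) (i : Fin (F.p + 1)) :
    x ∈ G.ends (F.edge i) := by
  rw [F.ends_eq]
  exact Sym2.mem_mk_left _ _

lemma edge_ne_of_ne_zero (F : MultiFan G k D c x e₀ y₀) {i : Fin (F.p + 1)} (hi : i ≠ 0) :
    F.edge i ≠ e₀ :=
  fun h => hi (F.edge_inj (h.trans F.edge_zero.symm))

def truncate (F : MultiFan G k D c x e₀ y₀) (c' : G.E → ℕ) (n : Fin (F.p + 1))
    (h : ∀ i ≤ n, i ≠ 0 → ∀ j < i, c (F.edge i) ∈ G.missingOn k D c (F.vx j) →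
      c' (F.edge i) ∈ G.missingOn k D c' (F.vx j)) :
    MultiFan G k D c' x e₀ y₀ where
  p := n
  edge := F.edge ∘ Fin.castLE (by omega)
  vx := F.vx ∘ Fin.castLE (by omega)
  edge_zero := F.edge_zero
  vx_zero := F.vx_zero
  ends_eq _ := F.ends_eq _
  edge_inj := F.edge_inj.comp (Fin.castLE_injective _)
  fan_cond i hi := by
    have hi' : Fin.castLE (by omega) i ≠ (0 : Fin (F.p + 1)) := by
      rw [Ne, Fin.ext_iff, Fin.val_castLE, Fin.val_zero]
      exact Fin.val_ne_of_ne hi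
    obtain ⟨j, hj, hmem⟩ := F.fan_cond _ hi'
    have hin : Fin.castLE (by omega) i ≤ n := by
      rw [Fin.le_def, Fin.val_castLE]
      exact Nat.lt_succ_iff.mp i.isLt
    exact ⟨⟨j, Nat.lt_succ_of_lt (hj.trans_le hin)⟩, hj, h _ hin hi' j hj hmem⟩

theorem exists_isProperColoring_of_mem_missingOn (hc : G.IsProperColoringOn k {e₀}ᶜ c)
    (F : MultiFan G k {e₀}ᶜ c x e₀ y₀) (i : Fin (F.p + 1)) {γ : ℕ}
    (hx : γ ∈ G.missingOn k {e₀}ᶜ c x) (hi : γ ∈ G.missingOn k {e₀}ᶜ c (F.vx i)) :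
    ∃ c', G.IsProperColoring k c' := by
  classical
  induction hn : (i : ℕ) using Nat.strong_induction_on generalizing c F i γ with
  | _ n ih =>
  subst hn
  by_cases h0 : i = 0
  · subst h0
    refine exists_isProperColoring_of_forall_mem_missingOn (γ := γ) hc fun v hv => ?_
    rw [← F.edge_zero, F.ends_eq, Sym2.mem_iff] at hv
    rcases hv with rfl | rfl
    exacts [hx, hi]
  obtain ⟨j, hji, hj⟩ := F.fan_cond i h0
  have hD : F.edge i ∈ ({e₀}ᶜ : Set G.E) := F.edge_ne_of_ne_zero h0
  have hc' : G.IsProperColoringOn k {e₀}ᶜ (Function.update c (F.edge i) γ) := by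
    have hsub : {e₀}ᶜ \ {F.edge i} ⊆ ({e₀}ᶜ : Set G.E) := Set.sdiff_subset
    have := (hc.mono hsub).update (g := F.edge i) fun v hv => by
      rw [F.ends_eq, Sym2.mem_iff] at hv
      rcases hv with rfl | rfl
      exacts [missingOn_anti hsub _ hx, missingOn_anti hsub _ hi]
    rwa [Set.insert_sdiff_singleton, Set.insert_eq_of_mem hD] at this
  have hfan : ∀ i' ≤ j, i' ≠ 0 → ∀ j' < i',
      c (F.edge i') ∈ G.missingOn k {e₀}ᶜ c (F.vx j') →
      Function.update c (F.edge i) γ (F.edge i') ∈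
        G.missingOn k {e₀}ᶜ (Function.update c (F.edge i) γ) (F.vx j') := by
    intro i' hi' h0' j' _ hmem
    rw [Function.update_of_ne (F.edge_inj.ne (hi'.trans_lt hji).ne)]
    exact mem_missingOn_update_of_ne hmem
      (hx.2 _ (F.edge_ne_of_ne_zero h0') (F.mem_ends_edge i'))
  have hne : c (F.edge i) ≠ γ := hx.2 _ hD (F.mem_ends_edge i)
  exact ih j hji hc' (F.truncate _ j hfan) (Fin.last _)
    (apply_mem_missingOn_update hc hD (F.mem_ends_edge i) hne) (mem_missingOn_update_of_ne hj hne) rfl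

theorem sameChain_of_mem_missingOn (hcol : ¬ ∃ c', G.IsProperColoring k c')
    (hc : G.IsProperColoringOn k {e₀}ᶜ c) (F : MultiFan G k {e₀}ᶜ c x e₀ y₀) {α β : ℕ}
    (hα : α ∈ G.missingOn k {e₀}ᶜ c x) (i : Fin (F.p + 1))
    (hβ : β ∈ G.missingOn k {e₀}ᶜ c (F.vx i)) :
    G.sameChain {e₀}ᶜ c α β x (F.vx i) := by
  induction i using WellFoundedLT.induction with
  | _ i ih =>
  by_contra hxi
  set C := {v | G.sameChain {e₀}ᶜ c α β (F.vx i) v}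
  have hC : ∀ a b, G.chainStep {e₀}ᶜ c α β a b → a ∈ C → b ∈ C :=
    fun _ _ hab ha => ha.tail hab
  have hxC : x ∉ C := fun h => hxi (sameChain_symm h)
  have hfan : ∀ i' ≤ i, i' ≠ 0 → ∀ j < i', c (F.edge i') ∈ G.missingOn k {e₀}ᶜ c (F.vx j) →
      G.kempeSwap c α β C (F.edge i') ∈ G.missingOn k {e₀}ᶜ (G.kempeSwap c α β C) (F.vx j) := by
    intro i' hi' h0 j hj hmem
    have hD : F.edge i' ∈ ({e₀}ᶜ : Set G.E) := F.edge_ne_of_ne_zero h0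
    rw [kempeSwap_of_notMem hC hD (F.mem_ends_edge i') hxC]
    have hα' : c (F.edge i') ≠ α := fun h => hα.2 _ hD (F.mem_ends_edge i') h
    by_cases hβ' : c (F.edge i') = β
    · have hjC : F.vx j ∉ C := fun h =>
        hxi ((ih j (hj.trans_le hi') (hβ' ▸ hmem)).trans (sameChain_symm h))
      exact mem_missingOn_kempeSwap_of_notMem hC hjC hmem
    · exact mem_missingOn_kempeSwap_of_ne hα' hβ' hmem
  apply hcol
  refine exists_isProperColoring_of_mem_missingOn (hc.kempeSwap hα.1 hβ.1 hC)
    (F.truncate _ i hfan) (Fin.last _) (mem_missingOn_kempeSwap_of_notMem hC hxC hα) ?_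
  have hαi := swap_mem_missingOn_kempeSwap hα.1 hβ.1 (C := C) .refl hβ
  rwa [Equiv.swap_apply_right] at hαi

end MultiFan

end Multigraph

theorem multifan_chain_general (G : Multigraph) (k : ℕ)
    (x y : G.V) (e₀ : G.E)
    (he : G.IsCriticalEdge k e₀)
    (φ : G.E → ℕ) (hφ : G.IsProperColoringOn k {e₀}ᶜ φ)
    (F : Multigraph.MultiFan G k {e₀}ᶜ φ x e₀ y)
    (i : Fin (F.p + 1)) (α β : ℕ)
    (hα : α ∈ G.missingOn k {e₀}ᶜ φ x)
    (hβ : β ∈ G.missingOn k {e₀}ᶜ φ (F.vx i)) :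
    G.sameChain {e₀}ᶜ φ α β x (F.vx i) :=
  F.sameChain_of_mem_missingOn he.not_exists_isProperColoring hφ hα i hβ

/-- **Lemma 3.1(b).** Let `e ∈ E_G(x,y)` be a `k`-critical edge with `k ≥ Δ(G)`, let `φ` be a
`k`-edge-coloring of `G-e` and let `F` be a multi-fan at `x` with respect to `e` and `φ`.
If `α ∈ φ̄(x)` and `β ∈ φ̄(y_i)` for some `0 ≤ i ≤ p`, then
`P_x(α,β) = P_{y_i}(α,β)`, i.e. `x` and `y_i` lie on the same `(α,β)`-chain. -/
theorem multifan_chain (G : Multigraph) (k : ℕ)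
    (x y : G.V) (e₀ : G.E) (hends : G.ends e₀ = s(x, y))
    (hΔ : G.maxDegree ≤ k) (he : G.IsCriticalEdge k e₀)
    (φ : G.E → ℕ) (hφ : G.IsProperColoringOn k {e₀}ᶜ φ)
    (F : Multigraph.MultiFan G k {e₀}ᶜ φ x e₀ y)
    (i : Fin (F.p + 1)) (α β : ℕ)
    (hα : α ∈ G.missingOn k {e₀}ᶜ φ x)
    (hβ : β ∈ G.missingOn k {e₀}ᶜ φ (F.vx i)) :
    G.sameChain {e₀}ᶜ φ α β x (F.vx i) :=
  multifan_chain_general G k x y e₀ he φ hφ F i α β hα hβ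
end
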